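/- arXiv:1606.06838 — 2 statements merged into one kernel-verified Lean document; each statement's English description precedes it below -/
import Mathlib

section
/- Let M = [m_{ij}] be an n×n complex Nekrasov matrix whose diagonal entries m_{ii} are real and positive, and let D = diag(d_1,…,d_n) with 0 ≤ d_i ≤ 1 for all i. Then the matrix M̃ = I − D + DM is a Nekrasov matrix. -/
open Finset

noncomputable def nekH {n : ℕ} {𝕜 : Type*} [RCLike 𝕜] (A : Matrix (Fin n) (Fin n) 𝕜) : Fin n → ℝ
  | i =>
    (∑ j : Fin n, if h : j < i then ‖A i j‖ / ‖A j j‖ * nekH A j else 0)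
      + ∑ j : Fin n, if i < j then ‖A i j‖ else 0
termination_by i => i.val
decreasing_by exact h

def IsNekrasov {n : ℕ} {𝕜 : Type*} [RCLike 𝕜] (A : Matrix (Fin n) (Fin n) 𝕜) : Prop :=
  ∀ i, nekH A i < ‖A i i‖

noncomputable def nekZ {n : ℕ} {𝕜 : Type*} [RCLike 𝕜] (A : Matrix (Fin n) (Fin n) 𝕜) : Fin n → ℝ
  | i => (∑ j : Fin n, if h : j < i then ‖A i j‖ / ‖A j j‖ * nekZ A j else 0) + 1
termination_by i => i.val
decreasing_by exact h

noncomputable def nekEta {n : ℕ} {𝕜 : Type*} [RCLike 𝕜] (M : Matrix (Fin n) (Fin n) 𝕜) : Fin n → ℝ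
  | i => (∑ j : Fin n, if h : j < i then ‖M i j‖ / min ‖M j j‖ 1 * nekEta M j else 0) + 1
termination_by i => i.val
decreasing_by exact h

noncomputable def linftyNorm {n : ℕ} {𝕜 : Type*} [RCLike 𝕜] (A : Matrix (Fin n) (Fin n) 𝕜) : ℝ :=
  ⨆ i, ∑ j, ‖A i j‖

noncomputable def rPlus {n : ℕ} (M : Matrix (Fin n) (Fin n) ℝ) (i : Fin n) : ℝ :=
  Finset.fold max 0 (fun j => M i j) (Finset.univ.erase i)

noncomputable def BPlus {n : ℕ} (M : Matrix (Fin n) (Fin n) ℝ) : Matrix (Fin n) (Fin n) ℝ :=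
  Matrix.of fun i j => M i j - rPlus M i

def IsBNekrasov {n : ℕ} (M : Matrix (Fin n) (Fin n) ℝ) : Prop :=
  IsNekrasov (BPlus M) ∧ ∀ i, 0 < BPlus M i i

def IsLCPSolution {n : ℕ} (M : Matrix (Fin n) (Fin n) ℝ) (q x : Fin n → ℝ) : Prop :=
  (∀ i, 0 ≤ x i) ∧ (∀ i, 0 ≤ (M.mulVec x + q) i) ∧ ∑ i, (M.mulVec x + q) i * x i = 0

def IsPMatrix {n : ℕ} (M : Matrix (Fin n) (Fin n) ℝ) : Prop :=
  ∀ S : Finset (Fin n), 0 < (M.submatrix (fun i : S => (i : Fin n)) (fun j : S => (j : Fin n))).det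


lemma finStrongInd {n : ℕ} {P : Fin n → Prop} (h : ∀ i, (∀ j, j < i → P j) → P i) :
    ∀ i, P i := by
  have key : ∀ k, ∀ i : Fin n, i.val ≤ k → P i := by
    intro k
    induction k with
    | zero => exact fun i hi => h i (fun j hj => absurd (Fin.lt_def.mp hj) (by omega))
    | succ k ih =>
        exact fun i hi => h i (fun j hj => ih j (by have := Fin.lt_def.mp hj; omega))
  exact fun i => key i.val i le_rfl

lemma nekH_nonneg {n : ℕ} {𝕜 : Type*} [RCLike 𝕜] (A : Matrix (Fin n) (Fin n) 𝕜) :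
    ∀ i, 0 ≤ nekH A i := by
  refine finStrongInd (fun i ih => ?_)
  rw [nekH]
  apply add_nonneg <;> apply Finset.sum_nonneg <;> intro j _
  · split
    · next h => exact mul_nonneg (div_nonneg (norm_nonneg _) (norm_nonneg _)) (ih j h)
    · exact le_refl 0
  · positivity


theorem stmt1 {n : ℕ} (M : Matrix (Fin n) (Fin n) ℂ)
    (hdiag : ∀ i, (M i i).im = 0 ∧ 0 < (M i i).re)
    (hNek : IsNekrasov M)
    (d : Fin n → ℝ) (hd : ∀ i, 0 ≤ d i ∧ d i ≤ 1) :
    IsNekrasov (1 - Matrix.diagonal (fun k => (d k : ℂ)) + Matrix.diagonal (fun k => (d k : ℂ)) * M) := by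
  set Mt := 1 - Matrix.diagonal (fun k => (d k : ℂ)) + Matrix.diagonal (fun k => (d k : ℂ)) * M with hMt
  have hoff : ∀ i j : Fin n, i ≠ j → ‖Mt i j‖ = d i * ‖M i j‖ := by
    intro i j hij
    have : Mt i j = (d i : ℂ) * M i j := by
      simp [hMt, Matrix.add_apply, Matrix.sub_apply, Matrix.one_apply_ne hij,
        Matrix.diagonal_apply_ne _ hij, Matrix.diagonal_mul]
    rw [this, norm_mul, Complex.norm_real, Real.norm_eq_abs, abs_of_nonneg (hd i).1]
  have hdiagMt : ∀ i : Fin n, Mt i i = ((1 - d i + d i * (M i i).re : ℝ) : ℂ) := by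
    intro i
    have hre : M i i = ((M i i).re : ℂ) := by
      apply Complex.ext <;> simp [(hdiag i).1]
    have e1 : Mt i i = 1 - (d i : ℂ) + (d i : ℂ) * M i i := by
      simp [hMt, Matrix.add_apply, Matrix.sub_apply, Matrix.one_apply_eq,
        Matrix.diagonal_apply_eq, Matrix.diagonal_mul]
    rw [e1, hre]
    push_cast [Complex.ofReal_re]
    ring
  have hdMtpos : ∀ i : Fin n, 0 < 1 - d i + d i * (M i i).re := by
    intro i
    rcases eq_or_lt_of_le (hd i).2 with h | h
    · nlinarith [(hdiag i).2, (hd i).1]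
    · nlinarith [(hdiag i).2, (hd i).1]
  have hnormMt : ∀ i : Fin n, ‖Mt i i‖ = 1 - d i + d i * (M i i).re := by
    intro i
    rw [hdiagMt i, Complex.norm_real, Real.norm_eq_abs, abs_of_pos (hdMtpos i)]
  have hnormM : ∀ i : Fin n, ‖M i i‖ = (M i i).re := by
    intro i
    have hre : M i i = ((M i i).re : ℂ) := by
      apply Complex.ext <;> simp [(hdiag i).1]
    rw [hre, Complex.norm_real, Real.norm_eq_abs, abs_of_pos (hdiag i).2, Complex.ofReal_re]
  -- main induction
  have key : ∀ i : Fin n, nekH Mt i ≤ d i * nekH M i := by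
    refine finStrongInd (fun i ih => ?_)
    rw [nekH, nekH, mul_add, Finset.mul_sum, Finset.mul_sum]
    apply add_le_add
    · apply Finset.sum_le_sum
      intro j _
      split_ifs with h
      · have hratio : nekH Mt j / ‖Mt j j‖ ≤ nekH M j / ‖M j j‖ := by
          rw [hnormMt j, hnormM j, div_le_div_iff₀ (hdMtpos j) (hdiag j).2]
          have := ih j h
          nlinarith [nekH_nonneg M j, (hd j).1, (hd j).2, (hdiag j).2]
        have hne : i ≠ j := Ne.symm (Fin.ne_of_lt h)
        calc ‖Mt i j‖ / ‖Mt j j‖ * nekH Mt j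
            = d i * ‖M i j‖ * (nekH Mt j / ‖Mt j j‖) := by
              rw [hoff i j hne]; ring
          _ ≤ d i * ‖M i j‖ * (nekH M j / ‖M j j‖) := by
              apply mul_le_mul_of_nonneg_left hratio
                (mul_nonneg (hd i).1 (norm_nonneg _))
          _ = d i * (‖M i j‖ / ‖M j j‖ * nekH M j) := by ring
      · simp
    · apply Finset.sum_le_sum
      intro j _
      split_ifs with h
      · rw [hoff i j (Fin.ne_of_lt h)]
      · simp
  intro i
  have h1 := key i
  have h2 := hNek i
  rw [hnormM i] at h2
  rw [hnormMt i]
  rcases eq_or_lt_of_le (hd i).1 with h | h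
  · rw [← h] at h1 ⊢
    simp at h1 ⊢
    nlinarith [h1]
  · nlinarith [nekH_nonneg M i, (hd i).2]
end

section
/- Let M = [m_{ij}] be an n×n complex Nekrasov matrix whose diagonal entries m_{ii} are real and positive, let D = diag(d_1,…,d_n) with 0 ≤ d_i ≤ 1 for all i, and set M̃ = I − D + DM = [m̃_{ij}]. Then for every i = 1,…,n one has z_i(M̃)/m̃_{ii} ≤ η_i(M)/min{m_{ii}, 1}. -/
open Finset

/-!
Off the diagonal `|m̃ᵢⱼ| = dᵢ |mᵢⱼ|`, while `m̃ᵢᵢ = 1 - dᵢ + dᵢ mᵢᵢ` is a convex combination of `1` and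
`mᵢᵢ`, hence at least `min {mᵢᵢ, 1}`. By strong induction on `i`, the recursion for `z` is then dominated
termwise by `dᵢ` times the one for `η`, giving `zᵢ(M̃) ≤ dᵢ (ηᵢ(M) - 1) + 1`, and the claim reduces to
an inequality between real numbers that holds because `ηᵢ(M) ≥ 1`.
-/

section

variable {n : ℕ} {𝕜 𝕜' : Type*} [RCLike 𝕜] [RCLike 𝕜']

theorem one_le_nekEta (M : Matrix (Fin n) (Fin n) 𝕜) (i : Fin n) : 1 ≤ nekEta M i := by
  induction i using WellFoundedLT.induction with
  | _ i ih =>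
    rw [nekEta]
    have hsum : 0 ≤ ∑ j : Fin n,
        if _ : j < i then ‖M i j‖ / min ‖M j j‖ 1 * nekEta M j else 0 := by
      refine Finset.sum_nonneg fun j _ => ?_
      split_ifs with hji
      · exact mul_nonneg (div_nonneg (norm_nonneg _) (le_min (norm_nonneg _) zero_le_one))
          (zero_le_one.trans (ih j hji))
      · exact le_rfl
    linarith

theorem min_le_one_sub_add_mul {d m : ℝ} (hd₀ : 0 ≤ d) (hd₁ : d ≤ 1) :
    min m 1 ≤ 1 - d + d * m := by
  nlinarith [min_le_left m 1, min_le_right m 1]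

theorem mul_min_le_mul_one_sub_add_mul {d m η : ℝ} (hd₀ : 0 ≤ d) (hd₁ : d ≤ 1) (hη : 1 ≤ η) :
    (d * (η - 1) + 1) * min m 1 ≤ η * (1 - d + d * m) := by
  have hm : min m 1 ≤ m := min_le_left m 1
  have h1 : min m 1 ≤ 1 := min_le_right m 1
  -- the difference is `(1 - d) (η - min m 1) + d η (m - min m 1)`
  nlinarith [mul_nonneg (sub_nonneg.2 hd₁) (sub_nonneg.2 (h1.trans hη)),
    mul_nonneg (mul_nonneg hd₀ (zero_le_one.trans hη)) (sub_nonneg.2 hm)]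

theorem nekZ_div_norm_le_nekEta_div {A : Matrix (Fin n) (Fin n) 𝕜}
    {M : Matrix (Fin n) (Fin n) 𝕜'} {d : Fin n → ℝ} (hd : ∀ i, 0 ≤ d i ∧ d i ≤ 1)
    (hM : ∀ i, 0 < ‖M i i‖) (hoff : ∀ i j, i ≠ j → ‖A i j‖ ≤ d i * ‖M i j‖)
    (hdiag : ∀ i, 1 - d i + d i * ‖M i i‖ ≤ ‖A i i‖) (i : Fin n) :
    nekZ A i / ‖A i i‖ ≤ nekEta M i / min ‖M i i‖ 1 := by
  have hc : ∀ j, 0 < min ‖M j j‖ 1 := fun j => lt_min (hM j) one_pos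
  have hA : ∀ j, 0 < ‖A j j‖ := fun j =>
    (hc j).trans_le ((min_le_one_sub_add_mul (hd j).1 (hd j).2).trans (hdiag j))
  induction i using WellFoundedLT.induction with
  | _ i ih =>
    have hterm : ∀ j : Fin n,
        (if _ : j < i then ‖A i j‖ / ‖A j j‖ * nekZ A j else 0)
          ≤ d i * (if _ : j < i then ‖M i j‖ / min ‖M j j‖ 1 * nekEta M j else 0) := by
      intro j
      split_ifs with hji
      · have hz : nekZ A j ≤ nekEta M j / min ‖M j j‖ 1 * ‖A j j‖ :=
          (div_le_iff₀ (hA j)).1 (ih j hji)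
        have hη : 0 ≤ nekEta M j / min ‖M j j‖ 1 :=
          div_nonneg (zero_le_one.trans (one_le_nekEta M j)) (hc j).le
        calc ‖A i j‖ / ‖A j j‖ * nekZ A j
            ≤ ‖A i j‖ / ‖A j j‖ * (nekEta M j / min ‖M j j‖ 1 * ‖A j j‖) := by gcongr
          _ = ‖A i j‖ * (nekEta M j / min ‖M j j‖ 1) := by field_simp [(hA j).ne']
          _ ≤ d i * ‖M i j‖ * (nekEta M j / min ‖M j j‖ 1) := by gcongr; exact hoff i j hji.ne'
          _ = d i * (‖M i j‖ / min ‖M j j‖ 1 * nekEta M j) := by ring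
      · rw [mul_zero]
    have hz : nekZ A i ≤ d i * (nekEta M i - 1) + 1 := by
      rw [nekZ, nekEta, add_sub_cancel_right, Finset.mul_sum]
      gcongr with j
      exact hterm j
    rw [div_le_div_iff₀ (hA i) (hc i)]
    calc nekZ A i * min ‖M i i‖ 1 ≤ (d i * (nekEta M i - 1) + 1) * min ‖M i i‖ 1 := by
          gcongr
      _ ≤ nekEta M i * (1 - d i + d i * ‖M i i‖) :=
          mul_min_le_mul_one_sub_add_mul (hd i).1 (hd i).2 (one_le_nekEta M i)
      _ ≤ nekEta M i * ‖A i i‖ := by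
          gcongr
          · exact zero_le_one.trans (one_le_nekEta M i)
          · exact hdiag i

end

section

variable {ι R : Type*} [Fintype ι] [DecidableEq ι] [Ring R]

theorem one_sub_diagonal_add_diagonal_mul_apply_of_ne (d : ι → R) (M : Matrix ι ι R) {i j : ι}
    (hij : i ≠ j) :
    (1 - Matrix.diagonal d + Matrix.diagonal d * M) i j = d i * M i j := by
  simp [Matrix.one_apply_ne hij, Matrix.diagonal_apply_ne _ hij, Matrix.diagonal_mul]

theorem one_sub_diagonal_add_diagonal_mul_apply_self (d : ι → R) (M : Matrix ι ι R) (i : ι) :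
    (1 - Matrix.diagonal d + Matrix.diagonal d * M) i i = 1 - d i + d i * M i i := by
  simp [Matrix.diagonal_mul]

end

theorem stmt5_general {n : ℕ} (M : Matrix (Fin n) (Fin n) ℂ)
    (hdiag : ∀ i, (M i i).im = 0 ∧ 0 < (M i i).re)
    (d : Fin n → ℝ) (hd : ∀ i, 0 ≤ d i ∧ d i ≤ 1) (i : Fin n) :
    nekZ (1 - Matrix.diagonal (fun k => (d k : ℂ)) + Matrix.diagonal (fun k => (d k : ℂ)) * M) i / ((1 - Matrix.diagonal (fun k => (d k : ℂ)) + Matrix.diagonal (fun k => (d k : ℂ)) * M) i i).re ≤ nekEta M i / min ((M i i).re) 1 := by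
  have hMii : ∀ j, M j j = ((M j j).re : ℂ) := fun j => Complex.ext rfl (by simp [(hdiag j).1])
  have hnormM : ∀ j, ‖M j j‖ = (M j j).re := fun j => by
    rw [hMii j, Complex.norm_of_nonneg (hdiag j).2.le, Complex.ofReal_re]
  have hMtii : ∀ j, (1 - Matrix.diagonal (fun k => (d k : ℂ))
      + Matrix.diagonal (fun k => (d k : ℂ)) * M) j j = ((1 - d j + d j * (M j j).re : ℝ) : ℂ) := by
    intro j
    push_cast
    rw [one_sub_diagonal_add_diagonal_mul_apply_self, ← hMii j]
  have hMtii_nonneg : ∀ j, 0 ≤ 1 - d j + d j * (M j j).re := fun j =>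
    (lt_min (hdiag j).2 one_pos).le.trans (min_le_one_sub_add_mul (hd j).1 (hd j).2)
  have key := nekZ_div_norm_le_nekEta_div
    (A := 1 - Matrix.diagonal (fun k => (d k : ℂ)) + Matrix.diagonal (fun k => (d k : ℂ)) * M)
    (M := M) hd (fun j => hnormM j ▸ (hdiag j).2)
    (fun j k hjk => by
      rw [one_sub_diagonal_add_diagonal_mul_apply_of_ne _ _ hjk, norm_mul,
        Complex.norm_of_nonneg (hd j).1])
    (fun j => by rw [hMtii j, Complex.norm_of_nonneg (hMtii_nonneg j), hnormM j]) i
  rw [hMtii i, Complex.norm_of_nonneg (hMtii_nonneg i), hnormM i] at key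
  rwa [hMtii i, Complex.ofReal_re]

theorem stmt5 {n : ℕ} (M : Matrix (Fin n) (Fin n) ℂ)
    (hdiag : ∀ i, (M i i).im = 0 ∧ 0 < (M i i).re)
    (hNek : IsNekrasov M)
    (d : Fin n → ℝ) (hd : ∀ i, 0 ≤ d i ∧ d i ≤ 1) (i : Fin n) :
    nekZ (1 - Matrix.diagonal (fun k => (d k : ℂ)) + Matrix.diagonal (fun k => (d k : ℂ)) * M) i / ((1 - Matrix.diagonal (fun k => (d k : ℂ)) + Matrix.diagonal (fun k => (d k : ℂ)) * M) i i).re ≤ nekEta M i / min ((M i i).re) 1 :=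
  stmt5_general M hdiag d hd i
end
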